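/- For all j_c > 0 and γ > 1/2, the map Λ_γ : ℝ³ → ℝ³ is continuously differentiable on all of ℝ³; in particular it is Fréchet differentiable at e = 0 with derivative w ↦ j_c γ w. -/

import Mathlib

open scoped RealInnerProductSpace Topology

/-- Moreau-Yosida regularization of the max-function `x ↦ max{1, x}`. -/
noncomputable def maxReg (γ x : ℝ) : ℝ :=
  if 1 / (2 * γ) ≤ x - 1 then x
  else if x - 1 ≤ -(1 / (2 * γ)) then 1
  else 1 + γ / 2 * (x - 1 + 1 / (2 * γ)) ^ 2

abbrev E3 := EuclideanSpace ℝ (Fin 3)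

/-- The regularized dual-variable map `Λ_γ(e) = j_c γ e / max_γ{1, γ|e|}`. -/
noncomputable def Lam (jc γ : ℝ) (e : E3) : E3 :=
  (jc * γ / maxReg γ (γ * ‖e‖)) • e

/-! With `a = 1 / (2γ)`, `max_γ{1, x} = 1 + γ/2 ((x - 1 + a)⁺² - (x - 1 - a)⁺²)`, which is `C¹`
because `s ↦ s⁺²` is. The norm is smooth away from `0`, and near `0` the condition `γ > 1/2`
(i.e. `a < 1`) makes `max_γ{1, γ‖e‖}` identically `1`, so `Λ_γ` is the linear map `j_c γ • id` there. -/

open Filter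

theorem hasDerivAt_posPart_sq (t : ℝ) : HasDerivAt (fun s : ℝ => s⁺ ^ 2) (2 * t⁺) t := by
  rcases lt_trichotomy t 0 with ht | rfl | ht
  · have hzero : (fun s : ℝ => s⁺ ^ 2) =ᶠ[𝓝 t] fun _ => 0 := by
      filter_upwards [eventually_lt_nhds ht] with s hs
      simp [posPart_eq_zero.2 hs.le]
    rw [posPart_eq_zero.2 ht.le, mul_zero]
    exact (hasDerivAt_const t 0).congr_of_eventuallyEq hzero
  · have hbound : (fun s : ℝ => s⁺ ^ 2) =O[𝓝 0] fun s => ‖s - 0‖ ^ 2 := by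
      refine .of_bound 1 (.of_forall fun s => ?_)
      rcases le_total s 0 with hs | hs
      · simp [posPart_eq_zero.2 hs, sq_nonneg]
      · simp [posPart_eq_self.2 hs]
    simpa using (hbound.hasFDerivAt (𝕜 := ℝ) one_lt_two).hasDerivAt
  · have hsq : (fun s : ℝ => s⁺ ^ 2) =ᶠ[𝓝 t] fun s => s ^ 2 := by
      filter_upwards [eventually_gt_nhds ht] with s hs
      rw [posPart_eq_self.2 hs.le]
    rw [posPart_eq_self.2 ht.le]
    simpa using (hasDerivAt_pow 2 t).congr_of_eventuallyEq hsq

theorem contDiff_posPart_sq : ContDiff ℝ 1 fun t : ℝ => t⁺ ^ 2 := by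
  rw [contDiff_one_iff_deriv, funext fun t => (hasDerivAt_posPart_sq t).deriv]
  exact ⟨fun t => (hasDerivAt_posPart_sq t).differentiableAt,
    continuous_const.mul continuous_posPart⟩

theorem maxReg_eq_posPart_sq {γ : ℝ} (hγ : 0 < γ) (x : ℝ) :
    maxReg γ x = 1 + γ / 2 * ((x - 1 + 1 / (2 * γ))⁺ ^ 2 - (x - 1 - 1 / (2 * γ))⁺ ^ 2) := by
  have ha : 0 < 1 / (2 * γ) := by positivity
  unfold maxReg
  split_ifs with hup hlow
  · rw [posPart_eq_self.2 (by linarith), posPart_eq_self.2 (by linarith)]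
    field_simp
    ring
  · rw [posPart_eq_zero.2 (by linarith), posPart_eq_zero.2 (by linarith)]
    ring
  · rw [posPart_eq_self.2 (by linarith), posPart_eq_zero.2 (by linarith)]
    ring

theorem contDiff_maxReg {γ : ℝ} (hγ : 0 < γ) : ContDiff ℝ 1 (maxReg γ) := by
  rw [funext (maxReg_eq_posPart_sq hγ)]
  exact contDiff_const.add <| contDiff_const.mul <|
    (contDiff_posPart_sq.comp (by fun_prop)).sub (contDiff_posPart_sq.comp (by fun_prop))

theorem one_le_maxReg {γ : ℝ} (hγ : 0 ≤ γ) (x : ℝ) : 1 ≤ maxReg γ x := by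
  unfold maxReg
  split_ifs
  · linarith [show 0 ≤ 1 / (2 * γ) by positivity]
  · rfl
  · nlinarith [sq_nonneg (x - 1 + 1 / (2 * γ))]

theorem maxReg_eq_one {γ x : ℝ} (hγ : 0 < γ) (hx : x - 1 ≤ -(1 / (2 * γ))) :
    maxReg γ x = 1 := by
  have ha : 0 < 1 / (2 * γ) := by positivity
  rw [maxReg, if_neg (by linarith), if_pos hx]

theorem maxReg_norm_eventuallyEq_one {E : Type*} [SeminormedAddGroup E] {γ : ℝ}
    (hγ : 1 / 2 < γ) :
    (fun e : E => maxReg γ (γ * ‖e‖)) =ᶠ[𝓝 0] fun _ => 1 := by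
  have hγ0 : 0 < γ := by linarith
  have hlt : γ * ‖(0 : E)‖ - 1 < -(1 / (2 * γ)) := by
    rw [norm_zero, mul_zero, zero_sub, neg_lt_neg_iff, div_lt_one (by positivity)]
    linarith
  filter_upwards [(by fun_prop : Continuous fun e : E => γ * ‖e‖ - 1).continuousAt.eventually_lt
    continuousAt_const hlt] with e he
  exact maxReg_eq_one hγ0 he.le

theorem contDiff_maxReg_norm {E : Type*} [NormedAddCommGroup E] [InnerProductSpace ℝ E] {γ : ℝ}
    (hγ : 1 / 2 < γ) :
    ContDiff ℝ 1 fun e : E => maxReg γ (γ * ‖e‖) := by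
  rw [contDiff_iff_contDiffAt]
  intro e
  rcases eq_or_ne e 0 with rfl | he
  · exact contDiffAt_const.congr_of_eventuallyEq (maxReg_norm_eventuallyEq_one hγ)
  · exact (contDiff_maxReg (by linarith)).contDiffAt.comp e
      (contDiffAt_const.mul (contDiffAt_norm ℝ he))

theorem Lam_contDiff_general (jc γ : ℝ) (hγ : 1 / 2 < γ) :
    ContDiff ℝ 1 (Lam jc γ) ∧
    HasFDerivAt (Lam jc γ) ((jc * γ) • ContinuousLinearMap.id ℝ E3) 0 := by
  have hden : ∀ e : E3, maxReg γ (γ * ‖e‖) ≠ 0 := fun e =>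
    (one_pos.trans_le (one_le_maxReg (by linarith) _)).ne'
  have hlin : Lam jc γ =ᶠ[𝓝 0] fun e => (jc * γ) • e := by
    filter_upwards [maxReg_norm_eventuallyEq_one hγ] with e he
    simp only [Lam, he, div_one]
  exact ⟨(contDiff_const.div (contDiff_maxReg_norm hγ) hden).smul contDiff_id,
    ((jc * γ) • ContinuousLinearMap.id ℝ E3).hasFDerivAt.congr_of_eventuallyEq hlin⟩

/-- For γ > 1/2, `Λ_γ` is continuously differentiable on all of ℝ³; in particular
Fréchet differentiable at 0 with derivative `w ↦ j_c γ w`. -/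
theorem Lam_contDiff (jc γ : ℝ) (hjc : 0 < jc) (hγ : 1 / 2 < γ) :
    ContDiff ℝ 1 (Lam jc γ) ∧
    HasFDerivAt (Lam jc γ) ((jc * γ) • ContinuousLinearMap.id ℝ E3) 0 :=
  Lam_contDiff_general jc γ hγ
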